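/- Let Vᵢ, gᵢ, Rᵢ, R, g be as in the connected sum setup, with n ≥ 2, each gᵢ ≥ 1, each Rᵢ nonnegative and nondecreasing with Rᵢ(1) = 1, and additionally Rᵢ(gᵢ) = Vᵢ(0) ≥ 1 and Rᵢ(gᵢ + 1) = Vᵢ(-1) = Vᵢ(1) + 1 ≥ 1 and Rᵢ(gᵢ + 2) = Vᵢ(-2) = Vᵢ(2) + 2 ≥ 2. Then R(g + 1) ≥ 2. -/

import Mathlib

/-! Since `Σ jᵢ = Σ gᵢ + 1`, some `jₖ` exceeds `gₖ`. If `jₖ ≥ gₖ + 2`, then already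
`Rₖ(jₖ) ≥ Rₖ(gₖ + 2) ≥ 2`. Otherwise `jₖ = gₖ + 1`, so `Rₖ(jₖ) ≥ 1`, and the remaining `jᵢ`
add up to `Σ_{i ≠ k} gᵢ > 0`; hence some `jₘ ≥ 1` with `m ≠ k`, and `Rₘ(jₘ) ≥ Rₘ(1) = 1`. -/

open Finset

theorem two_le_sum_of_ne {ι : Type*} [Fintype ι] {f : ι → ℕ} {k m : ι} (hkm : k ≠ m)
    (hk : 1 ≤ f k) (hm : 1 ≤ f m) : 2 ≤ ∑ i, f i := by
  classical
  calc 2 ≤ f k + f m := by omega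
    _ = ∑ i ∈ {k, m}, f i := (sum_pair hkm).symm
    _ ≤ ∑ i, f i := sum_le_sum_of_subset (subset_univ _)

theorem exists_ne_pos_of_sum_eq_sum_add_one {ι : Type*} [Fintype ι] [Nontrivial ι]
    {j g : ι → ℤ} (hg : ∀ i, 0 < g i) (hsum : ∑ i, j i = ∑ i, g i + 1) {k : ι}
    (hk : j k = g k + 1) : ∃ m ≠ k, 0 < j m := by
  classical
  have hrest : ∑ i ∈ univ.erase k, j i = ∑ i ∈ univ.erase k, g i := by
    have := add_sum_erase univ j (mem_univ k)
    have := add_sum_erase univ g (mem_univ k)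
    omega
  have hpos : 0 < ∑ i ∈ univ.erase k, g i := by
    obtain ⟨m, hm⟩ := exists_ne k
    exact sum_pos (fun i _ => hg i) ⟨m, mem_erase.mpr ⟨hm, mem_univ m⟩⟩
  obtain ⟨m, hm, hjm⟩ :=
    exists_lt_of_sum_lt (s := univ.erase k) (f := fun _ => (0 : ℤ)) (g := j)
      (by rwa [sum_const_zero, hrest])
  exact ⟨m, ne_of_mem_erase hm, hjm⟩

theorem R_g_add_one_ge_two_general (n : ℕ) (hn : 2 ≤ n)
    (V : Fin n → ℤ → ℕ) (gv : Fin n → ℕ) (hg : ∀ i, 1 ≤ gv i)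
    (hmono : ∀ i, ∀ j j' : ℤ, j ≤ j' →
      V i ((gv i : ℤ) - j) ≤ V i ((gv i : ℤ) - j'))
    (hone : ∀ i, V i ((gv i : ℤ) - 1) = 1)
    (hVg1 : ∀ i, 1 ≤ V i (-1))
    (hVg2 : ∀ i, 2 ≤ V i (-2)) :
    ∀ j : Fin n → ℤ, (∑ i, j i) = (∑ i, (gv i : ℤ)) + 1 →
      2 ≤ ∑ i, V i ((gv i : ℤ) - j i) := by
  intro j hsum
  have : Nontrivial (Fin n) := Fin.nontrivial_iff_two_le.mpr hn
  obtain ⟨k, -, hk⟩ := exists_lt_of_sum_lt (s := univ) (f := fun i => (gv i : ℤ)) (g := j)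
    (by omega)
  by_cases hk2 : (gv k : ℤ) + 2 ≤ j k
  · have h2 : 2 ≤ V k ((gv k : ℤ) - j k) := by
      have := hmono k _ _ hk2
      rw [sub_add_cancel_left] at this
      exact (hVg2 k).trans this
    exact h2.trans (single_le_sum (f := fun i => V i ((gv i : ℤ) - j i))
      (fun i _ => Nat.zero_le _) (mem_univ k))
  · have hjk : j k = gv k + 1 := by omega
    obtain ⟨m, hmk, hjm⟩ :=
      exists_ne_pos_of_sum_eq_sum_add_one (fun i => by exact_mod_cast hg i) hsum hjk
    apply two_le_sum_of_ne hmk.symm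
    · rw [hjk, sub_add_cancel_left]
      exact hVg1 k
    · simpa [hone m] using hmono m 1 (j m) hjm

/-- Connected-sum setup: with `Rᵢ(j) = Vᵢ(gᵢ - j)` nonnegative, nondecreasing,
`Rᵢ(1) = 1`, `Rᵢ(gᵢ) = Vᵢ(0) ≥ 1`, `Rᵢ(gᵢ+1) = Vᵢ(-1) ≥ 1`,
`Rᵢ(gᵢ+2) = Vᵢ(-2) ≥ 2`, every tuple `(j₁,…,jₙ)` with `Σ jᵢ = g + 1`
has `Σ Rᵢ(jᵢ) ≥ 2`, i.e. `R(g+1) ≥ 2`. -/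
theorem R_g_add_one_ge_two (n : ℕ) (hn : 2 ≤ n)
    (V : Fin n → ℤ → ℕ) (gv : Fin n → ℕ) (hg : ∀ i, 1 ≤ gv i)
    (hmono : ∀ i, ∀ j j' : ℤ, j ≤ j' →
      V i ((gv i : ℤ) - j) ≤ V i ((gv i : ℤ) - j'))
    (hone : ∀ i, V i ((gv i : ℤ) - 1) = 1)
    (hVg : ∀ i, 1 ≤ V i 0)
    (hVg1 : ∀ i, 1 ≤ V i (-1))
    (hVg2 : ∀ i, 2 ≤ V i (-2)) :
    ∀ j : Fin n → ℤ, (∑ i, j i) = (∑ i, (gv i : ℤ)) + 1 →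
      2 ≤ ∑ i, V i ((gv i : ℤ) - j i) :=
  R_g_add_one_ge_two_general n hn V gv hg hmono hone hVg1 hVg2
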